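/- Let Δt > 0, let f^n, f^{n+1} be phase-space densities and E^n, E^{n+1/2}, E^{n+1} electric fields satisfying the Strang-split Scheme-3 relations pointwise: E^{n+1/2}(x) = E^n(x) − (Δt/2) J_{f^n}(x); f^{n+1}(x,v) = f^n(x,v) − Δt( v·∇_x g(x,v) + E^{n+1/2}(x)·∇_v g(x,v) ) where g = (f^n + f^{n+1})/2; and E^{n+1}(x) = E^{n+1/2}(x) − (Δt/2) J_{f^{n+1}}(x). Then the modified discrete total energy is conserved: K(f^{n+1}) + W(E^{n+1}) − (Δt²/4)∫_{ℝ^d} |J_{f^{n+1}}(x)|² dx = K(f^n) + W(E^n) − (Δt²/4)∫_{ℝ^d} |J_{f^n}(x)|² dx. -/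

import Mathlib

set_option linter.unusedSectionVars false
set_option maxHeartbeats 2000000

open MeasureTheory
open scoped RealInnerProductSpace

noncomputable section

/-- Points of `ℝ^d`. -/
abbrev Vec (d : ℕ) := EuclideanSpace ℝ (Fin d)

/-- Gradient of a phase-space function in its first (`x`) argument. -/
def gradx {d : ℕ} (f : Vec d × Vec d → ℝ) (x v : Vec d) : Vec d :=
  gradient (fun y => f (y, v)) x

/-- Gradient of a phase-space function in its second (`v`) argument. -/
def gradv {d : ℕ} (f : Vec d × Vec d → ℝ) (x v : Vec d) : Vec d :=
  gradient (fun w => f (x, w)) v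

/-- Charge density `ρ_f(x) = ∫ f(x,v) dv`. -/
def rho {d : ℕ} (f : Vec d × Vec d → ℝ) (x : Vec d) : ℝ :=
  ∫ v, f (x, v)

/-- Current `J_f(x) = ∫ f(x,v) v dv`. -/
def Jcur {d : ℕ} (f : Vec d × Vec d → ℝ) (x : Vec d) : Vec d :=
  ∫ v, f (x, v) • v

/-- Particle number `N(f)`. -/
def Npart {d : ℕ} (f : Vec d × Vec d → ℝ) : ℝ :=
  ∫ x, ∫ v, f (x, v)

/-- Kinetic energy `K(f) = ∫∫ f(x,v) |v|² dv dx`. -/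
def Kin {d : ℕ} (f : Vec d × Vec d → ℝ) : ℝ :=
  ∫ x, ∫ v, f (x, v) * ‖v‖ ^ 2

/-- Electric energy `W(E) = ∫ |E(x)|² dx`. -/
def Wel {d : ℕ} (E : Vec d → Vec d) : ℝ :=
  ∫ x, ‖E x‖ ^ 2

/-- A phase-space density: smooth and compactly supported. -/
def IsDensity {d : ℕ} (f : Vec d × Vec d → ℝ) : Prop :=
  ContDiff ℝ (⊤ : ℕ∞) f ∧ HasCompactSupport f

/-- An electric field: continuous with finite electric energy. -/
def IsEField {d : ℕ} (E : Vec d → Vec d) : Prop :=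
  Continuous E ∧ Integrable (fun x => ‖E x‖ ^ 2)

/-- Divergence in `x` of a vector field on `ℝ^d`. -/
def divg {d : ℕ} (F : Vec d → Vec d) (x : Vec d) : ℝ :=
  ∑ i : Fin d, fderiv ℝ F x (EuclideanSpace.single i 1) i

namespace Scheme3Aux

variable {d : ℕ} {G : Type*} [NormedAddCommGroup G] [NormedSpace ℝ G]

lemma hcs_slice {u : Vec d × Vec d → G} (hu : HasCompactSupport u) (x : Vec d) :
    HasCompactSupport fun v => u (x, v) :=
  HasCompactSupport.intro (hu.image continuous_snd) fun v hv =>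
    image_eq_zero_of_notMem_tsupport fun h => hv ⟨(x, v), h, rfl⟩

lemma hcs_slice_left {u : Vec d × Vec d → G} (hu : HasCompactSupport u) (v : Vec d) :
    HasCompactSupport fun x => u (x, v) :=
  HasCompactSupport.intro (hu.image continuous_fst) fun x hx =>
    image_eq_zero_of_notMem_tsupport fun h => hx ⟨(x, v), h, rfl⟩

lemma int_prod {u : Vec d × Vec d → G} (hu : Continuous u) (hcs : HasCompactSupport u) :
    Integrable u (volume : Measure (Vec d × Vec d)) :=
  hu.integrable_of_hasCompactSupport hcs

lemma iter_eq_prod {u : Vec d × Vec d → G} (hu : Continuous u) (hcs : HasCompactSupport u) :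
    (∫ x, ∫ v, u (x, v)) = ∫ p, u p := by
  rw [show (volume : Measure (Vec d × Vec d)) = Measure.prod volume volume from
    Measure.volume_eq_prod _ _,
    integral_prod _ (by rw [← Measure.volume_eq_prod _ _]; exact int_prod hu hcs)]

lemma iter_eq_prod' {u : Vec d × Vec d → G} (hu : Continuous u) (hcs : HasCompactSupport u) :
    (∫ v, ∫ x, u (x, v)) = ∫ p, u p := by
  rw [show (volume : Measure (Vec d × Vec d)) = Measure.prod volume volume from
    Measure.volume_eq_prod _ _,
    integral_prod_symm _ (by rw [← Measure.volume_eq_prod _ _]; exact int_prod hu hcs)]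

lemma cont_int {u : Vec d × Vec d → G} (hu : Continuous u) (hcs : HasCompactSupport u) :
    Continuous fun x => ∫ v, u (x, v) := by
  obtain ⟨C, hC⟩ := hcs.exists_bound_of_continuous hu
  have hKc : IsCompact (Prod.snd '' tsupport u) := hcs.image continuous_snd
  apply continuous_of_dominated (bound := (Prod.snd '' tsupport u).indicator fun _ => C)
  · exact fun x => (hu.comp (Continuous.prodMk_right x)).aestronglyMeasurable
  · intro x
    refine Filter.Eventually.of_forall fun v => ?_
    by_cases hv : v ∈ Prod.snd '' tsupport u
    · rw [Set.indicator_of_mem hv]; exact hC _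
    · rw [Set.indicator_of_notMem hv,
        image_eq_zero_of_notMem_tsupport (fun h => hv ⟨(x, v), h, rfl⟩)]
      simp
  · exact (integrable_indicator_iff hKc.measurableSet).2
      (integrableOn_const hKc.measure_lt_top.ne)
  · exact Filter.Eventually.of_forall fun v =>
      hu.comp (continuous_id.prodMk continuous_const)

lemma hcs_int {u : Vec d × Vec d → G} (hcs : HasCompactSupport u) :
    HasCompactSupport fun x => ∫ v, u (x, v) :=
  HasCompactSupport.intro (hcs.image continuous_fst) fun x hx => by
    have : ∀ v, u (x, v) = 0 := fun v =>
      image_eq_zero_of_notMem_tsupport fun h => hx ⟨(x, v), h, rfl⟩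
    simp [this]

lemma hasFDerivAt_slice_x {g : Vec d × Vec d → ℝ} (hg : ContDiff ℝ (⊤ : ℕ∞) g) (x v : Vec d) :
    HasFDerivAt (fun y => g (y, v))
      ((fderiv ℝ g (x, v)).comp (ContinuousLinearMap.inl ℝ (Vec d) (Vec d))) x :=
  ((hg.differentiable (by simp) (x, v)).hasFDerivAt).comp x
    (HasFDerivAt.prodMk (hasFDerivAt_id x) (hasFDerivAt_const v x))

lemma hasFDerivAt_slice_v {g : Vec d × Vec d → ℝ} (hg : ContDiff ℝ (⊤ : ℕ∞) g) (x v : Vec d) :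
    HasFDerivAt (fun w => g (x, w))
      ((fderiv ℝ g (x, v)).comp (ContinuousLinearMap.inr ℝ (Vec d) (Vec d))) v :=
  ((hg.differentiable (by simp) (x, v)).hasFDerivAt).comp v
    (HasFDerivAt.prodMk (hasFDerivAt_const x v) (hasFDerivAt_id v))

lemma fderiv_slice_x {g : Vec d × Vec d → ℝ} (hg : ContDiff ℝ (⊤ : ℕ∞) g) (x v c : Vec d) :
    fderiv ℝ (fun y => g (y, v)) x c = fderiv ℝ g (x, v) (c, 0) := by
  rw [(hasFDerivAt_slice_x hg x v).fderiv]; rfl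

lemma fderiv_slice_v {g : Vec d × Vec d → ℝ} (hg : ContDiff ℝ (⊤ : ℕ∞) g) (x v c : Vec d) :
    fderiv ℝ (fun w => g (x, w)) v c = fderiv ℝ g (x, v) (0, c) := by
  rw [(hasFDerivAt_slice_v hg x v).fderiv]; rfl

lemma inner_gradx_eq {g : Vec d × Vec d → ℝ} (hg : ContDiff ℝ (⊤ : ℕ∞) g) (x v c : Vec d) :
    ⟪c, gradx g x v⟫ = fderiv ℝ g (x, v) (c, 0) := by
  rw [real_inner_comm]
  have : ⟪gradx g x v, c⟫ = fderiv ℝ (fun y => g (y, v)) x c := by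
    rw [gradx, gradient, InnerProductSpace.toDual_symm_apply]
  rw [this, fderiv_slice_x hg]

lemma inner_gradv_eq {g : Vec d × Vec d → ℝ} (hg : ContDiff ℝ (⊤ : ℕ∞) g) (x v c : Vec d) :
    ⟪c, gradv g x v⟫ = fderiv ℝ g (x, v) (0, c) := by
  rw [real_inner_comm]
  have : ⟪gradv g x v, c⟫ = fderiv ℝ (fun w => g (x, w)) v c := by
    rw [gradv, gradient, InnerProductSpace.toDual_symm_apply]
  rw [this, fderiv_slice_v hg]

/-- The integral over `ℝ^d` of a directional derivative of a smooth compactly supported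
function vanishes. -/
lemma integral_fderiv_zero (φ : Vec d → ℝ) (h1 : ContDiff ℝ (⊤ : ℕ∞) φ) (h2 : HasCompactSupport φ)
    (c : Vec d) : ∫ x, fderiv ℝ φ x c = 0 := by
  have hφd : Differentiable ℝ φ := h1.differentiable (by simp)
  have hfc : Continuous fun x => fderiv ℝ φ x c :=
    (h1.continuous_fderiv (by simp)).clm_apply continuous_const
  have hfs : HasCompactSupport fun x => fderiv ℝ φ x c := h2.fderiv_apply ℝ c
  have key := integral_mul_fderiv_eq_neg_fderiv_mul_of_integrable
    (μ := (volume : Measure (Vec d))) (f := fun _ : Vec d => (1 : ℝ)) (g := φ) (v := c)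
    ?_ ?_ ?_ (fun x _ => differentiable_const 1 x) (fun x _ => hφd x)
  · simpa [fderiv_const] using key
  · have : (fun x : Vec d => fderiv ℝ (fun _ : Vec d => (1 : ℝ)) x c * φ x) = fun _ => 0 := by
      ext x; simp [fderiv_const]
    rw [this]; exact integrable_zero _ _ _
  · simpa using hfc.integrable_of_hasCompactSupport hfs
  · simpa using h1.continuous.integrable_of_hasCompactSupport h2

lemma hasFDerivAt_norm_sq (v : Vec d) :
    HasFDerivAt (fun w : Vec d => ‖w‖ ^ 2) ((2 : ℝ) • (innerSL ℝ v : Vec d →L[ℝ] ℝ)) v := by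
  have h := (hasFDerivAt_id v).inner ℝ (hasFDerivAt_id v)
  have h2 : HasFDerivAt (fun w : Vec d => ‖w‖ ^ 2)
      ((fderivInnerCLM ℝ (v, v)).comp
        ((ContinuousLinearMap.id ℝ (Vec d)).prod (ContinuousLinearMap.id ℝ (Vec d)))) v := by
    have heq : (fun t : Vec d => (inner ℝ (id t) (id t) : ℝ)) = fun w : Vec d => ‖w‖ ^ 2 := by
      ext w; simp only [id]; exact real_inner_self_eq_norm_sq w
    rw [heq] at h
    exact h
  refine h2.congr_fderiv ?_
  ext c
  simp only [ContinuousLinearMap.smul_apply, innerSL_apply_apply, ContinuousLinearMap.comp_apply,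
    ContinuousLinearMap.prod_apply, ContinuousLinearMap.id_apply, fderivInnerCLM_apply,
    smul_eq_mul]
  rw [real_inner_comm c v]
  ring

/-- Integration by parts in the velocity variable against the weight `‖v‖²`. -/
lemma ibp_v (ψ : Vec d → ℝ) (h1 : ContDiff ℝ (⊤ : ℕ∞) ψ) (h2 : HasCompactSupport ψ) (c : Vec d) :
    ∫ v, fderiv ℝ ψ v c * ‖v‖ ^ 2 = - ∫ v, ψ v * (2 * ⟪v, c⟫) := by
  have hn : ContDiff ℝ (⊤ : ℕ∞) fun v : Vec d => ‖v‖ ^ 2 := contDiff_norm_sq ℝ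
  have hφ : ContDiff ℝ (⊤ : ℕ∞) fun v => ψ v * ‖v‖ ^ 2 := h1.mul hn
  have hφc : HasCompactSupport fun v => ψ v * ‖v‖ ^ 2 := h2.mul_right
  have key := integral_fderiv_zero _ hφ hφc c
  have hder : ∀ v : Vec d, fderiv ℝ (fun w => ψ w * ‖w‖ ^ 2) v c =
      fderiv ℝ ψ v c * ‖v‖ ^ 2 + ψ v * (2 * ⟪v, c⟫) := by
    intro v
    have h := ((h1.differentiable (by simp) v).hasFDerivAt.mul (hasFDerivAt_norm_sq v)).fderiv
    rw [show (fun w => ψ w * ‖w‖ ^ 2) = (ψ * fun w => ‖w‖ ^ 2) from rfl, h]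
    simp [real_inner_comm]
    ring
  rw [integral_congr_ae (Filter.Eventually.of_forall hder)] at key
  have hA : Integrable fun v : Vec d => fderiv ℝ ψ v c * ‖v‖ ^ 2 :=
    (((h1.continuous_fderiv (by simp)).clm_apply continuous_const).mul
      ((continuous_norm).pow 2)).integrable_of_hasCompactSupport (h2.fderiv_apply ℝ c).mul_right
  have hB : Integrable fun v : Vec d => ψ v * (2 * ⟪v, c⟫) :=
    (h1.continuous.mul (continuous_const.mul
      (continuous_id.inner continuous_const))).integrable_of_hasCompactSupport h2.mul_right
  rw [integral_add hA hB] at key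
  linarith

lemma u_cont {f : Vec d × Vec d → ℝ} (hf : IsDensity f) :
    Continuous fun p : Vec d × Vec d => f p • p.2 :=
  hf.1.continuous.smul continuous_snd

lemma u_hcs {f : Vec d × Vec d → ℝ} (hf : IsDensity f) :
    HasCompactSupport fun p : Vec d × Vec d => f p • p.2 :=
  hf.2.mono fun p hp => by
    simp only [Function.mem_support] at hp ⊢
    intro h; exact hp (by rw [h, zero_smul])

lemma Jcur_slice_int {f : Vec d × Vec d → ℝ} (hf : IsDensity f) (x : Vec d) :
    Integrable fun v => f (x, v) • v :=
  ((u_cont hf).comp (Continuous.prodMk_right x)).integrable_of_hasCompactSupport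
    (hcs_slice (u_hcs hf) x)

lemma Jcur_cont {f : Vec d × Vec d → ℝ} (hf : IsDensity f) : Continuous (Jcur f) := by
  have h := cont_int (u_cont hf) (u_hcs hf)
  exact h

lemma Jcur_hcs {f : Vec d × Vec d → ℝ} (hf : IsDensity f) : HasCompactSupport (Jcur f) := by
  have h := hcs_int (u_hcs hf)
  exact h

lemma inner_EJ_int {E J : Vec d → Vec d} (hE : Continuous E) (hJc : Continuous J)
    (hJs : HasCompactSupport J) : Integrable fun x => ⟪E x, J x⟫ :=
  (hE.inner hJc).integrable_of_hasCompactSupport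
    (hJs.mono fun x hx => by
      simp only [Function.mem_support] at hx ⊢
      intro h; exact hx (by rw [h, inner_zero_right]))

lemma normsq_J_int {J : Vec d → Vec d} (hJc : Continuous J) (hJs : HasCompactSupport J) :
    Integrable fun x => ‖J x‖ ^ 2 :=
  ((hJc.norm).pow 2).integrable_of_hasCompactSupport
    (hJs.mono fun x hx => by
      simp only [Function.mem_support] at hx ⊢
      intro h; exact hx (by simp [h]))

lemma Wel_expand {E J : Vec d → Vec d} (hE : IsEField E) (hJc : Continuous J)
    (hJs : HasCompactSupport J) (t : ℝ) :
    Wel (fun x => E x - t • J x) =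
      Wel E - (2 * t) * (∫ x, ⟪E x, J x⟫) + t ^ 2 * ∫ x, ‖J x‖ ^ 2 := by
  have h1 : Integrable fun x => ‖E x‖ ^ 2 := hE.2
  have h2 : Integrable fun x => ⟪E x, J x⟫ := inner_EJ_int hE.1 hJc hJs
  have h3 : Integrable fun x => ‖J x‖ ^ 2 := normsq_J_int hJc hJs
  have hpt : ∀ x, ‖E x - t • J x‖ ^ 2 =
      ‖E x‖ ^ 2 - (2 * t) * ⟪E x, J x⟫ + t ^ 2 * ‖J x‖ ^ 2 := by
    intro x
    rw [norm_sub_sq_real, real_inner_smul_right, norm_smul, mul_pow, Real.norm_eq_abs, sq_abs]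
    ring
  have hsub : Integrable fun x => ‖E x‖ ^ 2 - 2 * t * ⟪E x, J x⟫ := h1.sub (h2.const_mul _)
  have hC : Integrable fun x => t ^ 2 * ‖J x‖ ^ 2 := h3.const_mul _
  unfold Wel
  rw [integral_congr_ae (Filter.Eventually.of_forall hpt),
    integral_add hsub hC, integral_sub h1 (h2.const_mul _), integral_const_mul, integral_const_mul]

end Scheme3Aux

open Scheme3Aux

/-- conservation of the modified total energy for the Strang-split Scheme-3. -/
theorem scheme3_modified_energy_conservation
    {d : ℕ} (hd : 1 ≤ d) (Δt : ℝ) (hΔt : 0 < Δt)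
    (fn fn1 : Vec d × Vec d → ℝ) (En Eh En1 : Vec d → Vec d)
    (hfn : IsDensity fn) (hfn1 : IsDensity fn1)
    (hEn : IsEField En) (hEh : IsEField Eh) (hEn1 : IsEField En1)
    (h1 : ∀ x : Vec d, Eh x = En x - (Δt / 2) • Jcur fn x)
    (h2 : ∀ x v : Vec d, fn1 (x, v) =
      fn (x, v) - Δt * (⟪v, gradx (fun p => (fn p + fn1 p) / 2) x v⟫ +
        ⟪Eh x, gradv (fun p => (fn p + fn1 p) / 2) x v⟫))
    (h3 : ∀ x : Vec d, En1 x = Eh x - (Δt / 2) • Jcur fn1 x) :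
    Kin fn1 + Wel En1 - (Δt ^ 2 / 4) * (∫ x, ‖Jcur fn1 x‖ ^ 2) =
      Kin fn + Wel En - (Δt ^ 2 / 4) * (∫ x, ‖Jcur fn x‖ ^ 2) := by
  classical
  set g : Vec d × Vec d → ℝ := fun p => (fn p + fn1 p) / 2 with hgdef
  have hgsm : ContDiff ℝ (⊤ : ℕ∞) g := (hfn.1.add hfn1.1).div_const 2
  have hgcs : HasCompactSupport g := by
    have h := (hfn.2.add hfn1.2).comp_left (g := fun r : ℝ => r / 2) (by simp)
    have he : ((fun r : ℝ => r / 2) ∘ (fn + fn1)) = g := by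
      funext p; simp [hgdef, Function.comp, Pi.add_apply]
    rwa [he] at h
  have hgD : IsDensity g := ⟨hgsm, hgcs⟩
  -- kinetic weights
  have hw0c : Continuous fun p : Vec d × Vec d => fn p * ‖p.2‖ ^ 2 :=
    hfn.1.continuous.mul ((continuous_snd.norm).pow 2)
  have hw1c : Continuous fun p : Vec d × Vec d => fn1 p * ‖p.2‖ ^ 2 :=
    hfn1.1.continuous.mul ((continuous_snd.norm).pow 2)
  have hw0s : HasCompactSupport fun p : Vec d × Vec d => fn p * ‖p.2‖ ^ 2 := hfn.2.mul_right
  have hw1s : HasCompactSupport fun p : Vec d × Vec d => fn1 p * ‖p.2‖ ^ 2 := hfn1.2.mul_right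
  have hKin0 : Kin fn = ∫ p : Vec d × Vec d, fn p * ‖p.2‖ ^ 2 := iter_eq_prod hw0c hw0s
  have hKin1 : Kin fn1 = ∫ p : Vec d × Vec d, fn1 p * ‖p.2‖ ^ 2 := iter_eq_prod hw1c hw1s
  -- the transport terms
  set a : Vec d × Vec d → ℝ := fun p => fderiv ℝ g p (p.2, 0) * ‖p.2‖ ^ 2 with hadef
  set b : Vec d × Vec d → ℝ := fun p => fderiv ℝ g p (0, Eh p.1) * ‖p.2‖ ^ 2 with hbdef
  have hfdc : Continuous (fderiv ℝ g) := hgsm.continuous_fderiv (by simp)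
  have hfds : HasCompactSupport (fderiv ℝ g) := hgcs.fderiv (𝕜 := ℝ)
  have hac : Continuous a :=
    (hfdc.clm_apply (continuous_snd.prodMk continuous_const)).mul ((continuous_snd.norm).pow 2)
  have hbc : Continuous b :=
    (hfdc.clm_apply (continuous_const.prodMk (hEh.1.comp continuous_fst))).mul
      ((continuous_snd.norm).pow 2)
  have has : HasCompactSupport a := hfds.mono fun p hp => by
    simp only [Function.mem_support, hadef] at hp ⊢
    intro h; exact hp (by rw [h]; simp)
  have hbs : HasCompactSupport b := hfds.mono fun p hp => by
    simp only [Function.mem_support, hbdef] at hp ⊢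
    intro h; exact hp (by rw [h]; simp)
  have hinta : Integrable a (volume : Measure (Vec d × Vec d)) := int_prod hac has
  have hintb : Integrable b (volume : Measure (Vec d × Vec d)) := int_prod hbc hbs
  have hint0 : Integrable (fun p : Vec d × Vec d => fn p * ‖p.2‖ ^ 2) := int_prod hw0c hw0s
  -- pointwise kinetic identity
  have hpt : ∀ p : Vec d × Vec d, fn1 p * ‖p.2‖ ^ 2 = fn p * ‖p.2‖ ^ 2 - Δt * (a p + b p) := by
    rintro ⟨x, v⟩
    have h := h2 x v
    rw [inner_gradx_eq hgsm x v v, inner_gradv_eq hgsm x v (Eh x)] at h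
    simp only [hadef, hbdef]
    rw [h]; ring
  have hKdiff : Kin fn1 = Kin fn -
      Δt * ((∫ p : Vec d × Vec d, a p) + ∫ p : Vec d × Vec d, b p) := by
    have hplus : Integrable fun p : Vec d × Vec d => a p + b p := hinta.add hintb
    have hab : Integrable fun p : Vec d × Vec d => Δt * (a p + b p) := hplus.const_mul Δt
    rw [hKin1, hKin0, integral_congr_ae (Filter.Eventually.of_forall hpt),
      integral_sub hint0 hab, integral_const_mul, integral_add hinta hintb]
  -- the x-transport integral vanishes
  have hIa : (∫ p : Vec d × Vec d, a p) = 0 := by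
    rw [← iter_eq_prod' hac has]
    have hz : ∀ v : Vec d, (∫ x, a (x, v)) = 0 := by
      intro v
      have hφ : ContDiff ℝ (⊤ : ℕ∞) fun y : Vec d => g (y, v) :=
        hgsm.comp (contDiff_id.prodMk contDiff_const)
      have hφs : HasCompactSupport fun y : Vec d => g (y, v) := hcs_slice_left hgcs v
      have hz0 := integral_fderiv_zero _ hφ hφs v
      have he : ∀ x : Vec d, a (x, v) = fderiv ℝ (fun y : Vec d => g (y, v)) x v * ‖v‖ ^ 2 := by
        intro x; simp only [hadef]; rw [fderiv_slice_x hgsm]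
      rw [integral_congr_ae (Filter.Eventually.of_forall he), integral_mul_const, hz0, zero_mul]
    rw [integral_congr_ae (Filter.Eventually.of_forall hz), integral_zero]
  -- doubling identity for the current of the average
  have hJg2 : ∀ x, (2 : ℝ) • Jcur g x = Jcur fn x + Jcur fn1 x := by
    intro x
    have hints : Integrable fun v : Vec d => fn (x, v) • v + fn1 (x, v) • v :=
      (Jcur_slice_int hfn x).add (Jcur_slice_int hfn1 x)
    have : Jcur fn x + Jcur fn1 x = ∫ v, (fn (x, v) • v + fn1 (x, v) • v) :=
      (integral_add (Jcur_slice_int hfn x) (Jcur_slice_int hfn1 x)).symm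
    rw [this, Jcur, ← integral_smul]
    refine integral_congr_ae (Filter.Eventually.of_forall fun v => ?_)
    show (2 : ℝ) • (g (x, v) • v) = fn (x, v) • v + fn1 (x, v) • v
    rw [smul_smul, ← add_smul]
    congr 1
    simp only [hgdef]
    ring
  -- integrability of the field-current pairings
  have hIEJ0 : Integrable fun x => ⟪Eh x, Jcur fn x⟫ :=
    inner_EJ_int hEh.1 (Jcur_cont hfn) (Jcur_hcs hfn)
  have hIEJ1 : Integrable fun x => ⟪Eh x, Jcur fn1 x⟫ :=
    inner_EJ_int hEh.1 (Jcur_cont hfn1) (Jcur_hcs hfn1)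
  -- the v-transport integral
  have hIb : (∫ p : Vec d × Vec d, b p) =
      - ((∫ x, ⟪Eh x, Jcur fn x⟫) + ∫ x, ⟪Eh x, Jcur fn1 x⟫) := by
    rw [← iter_eq_prod hbc hbs]
    have hinner : ∀ x : Vec d, (∫ v, b (x, v)) =
        - (⟪Eh x, Jcur fn x⟫ + ⟪Eh x, Jcur fn1 x⟫) := by
      intro x
      have hψ : ContDiff ℝ (⊤ : ℕ∞) fun w : Vec d => g (x, w) :=
        hgsm.comp (contDiff_const.prodMk contDiff_id)
      have hψs : HasCompactSupport fun w : Vec d => g (x, w) := hcs_slice hgcs x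
      have he : ∀ v : Vec d, b (x, v) =
          fderiv ℝ (fun w : Vec d => g (x, w)) v (Eh x) * ‖v‖ ^ 2 := by
        intro v; simp only [hbdef]; rw [fderiv_slice_v hgsm]
      rw [integral_congr_ae (Filter.Eventually.of_forall he), ibp_v _ hψ hψs (Eh x)]
      have he2 : ∀ v : Vec d, g (x, v) * (2 * ⟪v, Eh x⟫) =
          ⟪Eh x, (2 : ℝ) • (g (x, v) • v)⟫ := by
        intro v
        rw [real_inner_smul_right, real_inner_smul_right, real_inner_comm v (Eh x)]
        ring
      rw [integral_congr_ae (Filter.Eventually.of_forall he2)]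
      have hint2 : Integrable fun v : Vec d => (2 : ℝ) • (g (x, v) • v) :=
        (Jcur_slice_int hgD x).smul (2 : ℝ)
      rw [integral_inner hint2, integral_smul]
      have h2x := hJg2 x
      simp only [Jcur] at h2x ⊢
      rw [h2x, inner_add_right]
    rw [integral_congr_ae (Filter.Eventually.of_forall hinner), integral_neg,
      integral_add hIEJ0 hIEJ1]
  -- kinetic balance
  have hK : Kin fn1 = Kin fn +
      Δt * ((∫ x, ⟪Eh x, Jcur fn x⟫) + ∫ x, ⟪Eh x, Jcur fn1 x⟫) := by
    rw [hKdiff, hIa, hIb]; ring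
  -- electric energy balance
  have hEnW : Wel En = Wel Eh + Δt * (∫ x, ⟪Eh x, Jcur fn x⟫) +
      (Δt ^ 2 / 4) * ∫ x, ‖Jcur fn x‖ ^ 2 := by
    have hEn_eq : En = fun x => Eh x - (-(Δt / 2)) • Jcur fn x := by
      funext x
      rw [h1 x, neg_smul, sub_neg_eq_add, sub_add_cancel]
    rw [hEn_eq, Wel_expand hEh (Jcur_cont hfn) (Jcur_hcs hfn) (-(Δt / 2))]
    ring
  have hEn1W : Wel En1 = Wel Eh - Δt * (∫ x, ⟪Eh x, Jcur fn1 x⟫) +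
      (Δt ^ 2 / 4) * ∫ x, ‖Jcur fn1 x‖ ^ 2 := by
    have hE1eq : En1 = fun x => Eh x - (Δt / 2) • Jcur fn1 x := funext h3
    rw [hE1eq, Wel_expand hEh (Jcur_cont hfn1) (Jcur_hcs hfn1) (Δt / 2)]
    ring
  rw [hK, hEnW, hEn1W]
  ring
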